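/- arXiv:2208.05710 — 7 statements merged into one kernel-verified Lean document; each statement's English description precedes it below -/
import Mathlib

section
/- For any competition resolution rule (any update map consistent with the chain dynamics), if x(t) is the state of the binary closed chain at time t and l(x) = min(l0(x), l1(x)) where l0(x) (resp. l1(x)) is the maximal length of a cyclic block of consecutive 0's (resp. 1's) in x, then l(x(t+1)) ≥ l(x(t)) − 1. -/
open Function

namespace ContourChain

variable {N : ℕ}

/-- Particles `i` and `i+1` compete at node `(i, i+1)` iff `x i = 0` and `x (i+1) = 1`. -/
def Competes (x : ZMod N → Bool) (i : ZMod N) : Prop :=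
  x i = false ∧ x (i + 1) = true

/-- `x'` is a possible successor of `x` under some competition resolution rule:
a particle stays only if it is involved in a competition, and in each competition
exactly one of the two particles moves. -/
def IsStep (x x' : ZMod N → Bool) : Prop :=
  (∀ i, x' i = x i → Competes x i ∨ Competes x (i - 1)) ∧
  (∀ i, Competes x i → (x' i = x i ↔ x' (i + 1) = !(x (i + 1))))

/-- Maximal length (capped at `N`) of a cyclic run of the value `b` in `x`. -/
noncomputable def maxRun (x : ZMod N → Bool) (b : Bool) : ℕ :=
  sSup {s : ℕ | s ≤ N ∧ ∃ i : ZMod N, ∀ k : ℕ, k < s → x (i + (k : ZMod N)) = b}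

/-- Maximal length of a 0-cluster. -/
noncomputable def l0 (x : ZMod N → Bool) : ℕ := maxRun x false

/-- Maximal length of a 1-cluster. -/
noncomputable def l1 (x : ZMod N → Bool) : ℕ := maxRun x true

/-- `l(x) = min (l0 x) (l1 x)`. -/
noncomputable def lmin (x : ZMod N → Bool) : ℕ := min (l0 x) (l1 x)

/-- One step in which every left competitor (the particle moving from cell 0 to cell 1) wins. -/
def leftStep (x : ZMod N → Bool) : ZMod N → Bool :=
  fun i => if x i = true ∧ x (i - 1) = false then true else !(x i)

/-- One step in which every right competitor (the particle moving from cell 1 to cell 0) wins. -/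
def rightStep (x : ZMod N → Bool) : ZMod N → Bool :=
  fun i => if x i = false ∧ x (i + 1) = true then false else !(x i)

/-- The long cluster rule `S₀`: left competitors win if `l0 x ≥ l1 x`, otherwise right ones win. -/
noncomputable def longClusterStep (x : ZMod N → Bool) : ZMod N → Bool :=
  if l1 x ≤ l0 x then leftStep x else rightStep x

/-- Free flight dynamics (no delays): every particle flips its cell. -/
def flipAll (x : ZMod N → Bool) : ZMod N → Bool := fun i => !(x i)

/-- A state of free movement: no competition occurs now or at any future step
(so every particle moves forever and the dynamics is `flipAll`). -/
def IsFree (x : ZMod N → Bool) : Prop :=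
  ∀ n : ℕ, ∀ i, ¬ Competes (flipAll^[n] x) i

/-- Number of steps to first reach a free-movement state under rule `S` (`⊤ = ∞` if never). -/
noncomputable def reachTime (S : (ZMod N → Bool) → ZMod N → Bool)
    (x : ZMod N → Bool) : ℕ∞ :=
  sInf ((↑) '' {n : ℕ | IsFree (S^[n] x)})

end ContourChain

namespace ContourChain

variable {N : ℕ}

lemma runSet_nonempty (x : ZMod N → Bool) (b : Bool) :
    {s : ℕ | s ≤ N ∧ ∃ i : ZMod N, ∀ k : ℕ, k < s → x (i + (k : ZMod N)) = b}.Nonempty :=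
  ⟨0, Nat.zero_le N, 0, fun k hk => absurd hk (Nat.not_lt_zero k)⟩

lemma runSet_bdd (x : ZMod N → Bool) (b : Bool) :
    BddAbove {s : ℕ | s ≤ N ∧ ∃ i : ZMod N, ∀ k : ℕ, k < s → x (i + (k : ZMod N)) = b} :=
  ⟨N, fun _ hs => hs.1⟩

lemma le_maxRun {x : ZMod N → Bool} {b : Bool} {s : ℕ} (hs : s ≤ N) (i : ZMod N)
    (hr : ∀ k : ℕ, k < s → x (i + (k : ZMod N)) = b) : s ≤ maxRun x b :=
  le_csSup (runSet_bdd x b) ⟨hs, i, hr⟩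

lemma maxRun_mem (x : ZMod N → Bool) (b : Bool) :
    maxRun x b ≤ N ∧ ∃ i : ZMod N, ∀ k : ℕ, k < maxRun x b → x (i + (k : ZMod N)) = b :=
  Nat.sSup_mem (runSet_nonempty x b) (runSet_bdd x b)

/-- From a run of `b` of length `m` in `x`, any `IsStep` successor has a run of `!b`
of length `m - 1`. -/
lemma run_flip {x x' : ZMod N → Bool} (h : IsStep x x') {i : ZMod N} {m : ℕ} {b : Bool}
    (hr : ∀ k : ℕ, k < m → x (i + (k : ZMod N)) = b) :
    ∃ j : ZMod N, ∀ k : ℕ, k < m - 1 → x' (j + (k : ZMod N)) = !b := by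
  cases b with
  | true =>
    refine ⟨i + 1, fun k hk => ?_⟩
    have hx : x (i + 1 + (k : ZMod N)) = true := by
      have h1 := hr (k + 1) (by omega)
      rw [show ((k + 1 : ℕ) : ZMod N) = (k : ZMod N) + 1 by push_cast; ring] at h1
      rw [show i + 1 + (k : ZMod N) = i + ((k : ZMod N) + 1) by ring]
      exact h1
    have hx0 : x (i + 1 + (k : ZMod N) - 1) = true := by
      have h1 := hr k (by omega)
      rw [show i + 1 + (k : ZMod N) - 1 = i + (k : ZMod N) by ring]
      exact h1
    have hne : x' (i + 1 + (k : ZMod N)) ≠ x (i + 1 + (k : ZMod N)) := by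
      intro heq
      rcases h.1 _ heq with ⟨hc, -⟩ | ⟨hc, -⟩
      · rw [hx] at hc; simp at hc
      · rw [hx0] at hc; simp at hc
    rw [hx] at hne
    simpa using hne
  | false =>
    refine ⟨i, fun k hk => ?_⟩
    have hx : x (i + (k : ZMod N)) = false := hr k (by omega)
    have hx1 : x (i + (k : ZMod N) + 1) = false := by
      have h1 := hr (k + 1) (by omega)
      rw [show ((k + 1 : ℕ) : ZMod N) = (k : ZMod N) + 1 by push_cast; ring] at h1
      rw [show i + (k : ZMod N) + 1 = i + ((k : ZMod N) + 1) by ring]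
      exact h1
    have hne : x' (i + (k : ZMod N)) ≠ x (i + (k : ZMod N)) := by
      intro heq
      rcases h.1 _ heq with ⟨-, hc⟩ | ⟨-, hc⟩
      · rw [hx1] at hc; simp at hc
      · rw [show i + (k : ZMod N) - 1 + 1 = i + (k : ZMod N) by ring, hx] at hc
        simp at hc
    rw [hx] at hne
    simpa using hne

/-- For any competition resolution rule, `l(x(t+1)) ≥ l(x(t)) - 1`. -/
theorem lmin_step_ge (hN : 0 < N) (x x' : ZMod N → Bool) (h : IsStep x x') :
    lmin x - 1 ≤ lmin x' := by
  obtain ⟨h0N, i0, h0⟩ := maxRun_mem x false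
  obtain ⟨h1N, i1, h1⟩ := maxRun_mem x true
  obtain ⟨j0, hj0⟩ := run_flip h h0
  obtain ⟨j1, hj1⟩ := run_flip h h1
  have A : maxRun x false - 1 ≤ l1 x' :=
    le_maxRun (by omega) j0 (by simpa using hj0)
  have B : maxRun x true - 1 ≤ l0 x' :=
    le_maxRun (by omega) j1 (by simpa using hj1)
  simp only [lmin, l0, l1] at *
  omega

end ContourChain
end

section
/- Under the long cluster rule S0, for any state x with l(x) ≥ 1, one step of the deterministic dynamics yields a state x' with l(x') = l(x) − 1. Consequently, after exactly l(x) steps the system reaches a state with l = 0. -/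
open Function

/-!
Under `leftStep`, cell `i` ends in state `0` exactly when cells `i - 1` and `i` were both `1`,
and every `0` becomes a `1`. Hence a `0`-run of length `s ≥ 1` after the step is the same thing
as a `1`-run of length `s + 1` before it, while every `0`-run survives as a `1`-run: the longest
`0`-cluster becomes one shorter than the old longest `1`-cluster, and the longest `1`-cluster is at
least the old longest `0`-cluster. When `l1 x ≤ l0 x` this says `l` drops by one. `rightStep` is
`leftStep` conjugated by complementing all bits and shifting by one cell, which swaps `l0` and
`l1`, so the other case of the long cluster rule reduces to the first one.
-/

namespace ContourChain

variable {N : ℕ}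

def HasRun (x : ZMod N → Bool) (b : Bool) (s : ℕ) : Prop :=
  ∃ i : ZMod N, ∀ k : ℕ, k < s → x (i + (k : ZMod N)) = b

section MaxRun

variable {x y : ZMod N → Bool} {b c : Bool}

theorem HasRun.mono {s t : ℕ} (h : HasRun x b s) (hts : t ≤ s) : HasRun x b t :=
  let ⟨i, hi⟩ := h
  ⟨i, fun k hk => hi k (hk.trans_le hts)⟩

theorem maxRun_eq_sSup (x : ZMod N → Bool) (b : Bool) :
    maxRun x b = sSup {s : ℕ | s ≤ N ∧ HasRun x b s} :=
  rfl

theorem bddAbove_runLengths (x : ZMod N → Bool) (b : Bool) :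
    BddAbove {s : ℕ | s ≤ N ∧ HasRun x b s} :=
  ⟨N, fun _ hs => hs.1⟩

theorem nonempty_runLengths (x : ZMod N → Bool) (b : Bool) :
    {s : ℕ | s ≤ N ∧ HasRun x b s}.Nonempty :=
  ⟨0, N.zero_le, 0, fun _ hk => absurd hk (Nat.not_lt_zero _)⟩

theorem maxRun_le (x : ZMod N → Bool) (b : Bool) : maxRun x b ≤ N :=
  csSup_le (nonempty_runLengths x b) fun _ hs => hs.1

theorem le_maxRun_s2 {s : ℕ} (hsN : s ≤ N) (h : HasRun x b s) : s ≤ maxRun x b :=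
  le_csSup (bddAbove_runLengths x b) ⟨hsN, h⟩

theorem hasRun_maxRun (x : ZMod N → Bool) (b : Bool) : HasRun x b (maxRun x b) :=
  (Nat.sSup_mem (nonempty_runLengths x b) (bddAbove_runLengths x b)).2

theorem maxRun_lt (hN : 0 < N) {j : ZMod N} (hj : x j ≠ b) : maxRun x b < N := by
  have : NeZero N := ⟨hN.ne'⟩
  refine (maxRun_le x b).lt_of_ne fun hfull => hj ?_
  obtain ⟨i, hi⟩ := hasRun_maxRun x b
  -- a run of length `N` starting at `i` covers `j = i + (j - i).val`
  simpa using hi (j - i).val (hfull.symm ▸ ZMod.val_lt (j - i))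

theorem maxRun_congr (h : ∀ s, HasRun x b s ↔ HasRun y c s) : maxRun x b = maxRun y c := by
  simp only [maxRun_eq_sSup, h]

theorem maxRun_comp_add_right (x : ZMod N → Bool) (b : Bool) (a : ZMod N) :
    maxRun (fun i => x (i + a)) b = maxRun x b := by
  refine maxRun_congr fun s => ⟨fun ⟨i, hi⟩ => ⟨i + a, fun k hk => ?_⟩,
    fun ⟨i, hi⟩ => ⟨i - a, fun k hk => ?_⟩⟩
  · simpa only [add_right_comm] using hi k hk
  · simpa only [sub_add_eq_add_sub, add_sub_cancel_right] using hi k hk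

theorem maxRun_not (x : ZMod N → Bool) (b : Bool) :
    maxRun (fun i => !x i) b = maxRun x (!b) := by
  refine maxRun_congr fun s => ?_
  simp only [HasRun, Bool.not_eq_eq_eq_not]

end MaxRun

theorem l0_not (x : ZMod N → Bool) : l0 (fun i => !x i) = l1 x :=
  maxRun_not x false

theorem l1_not (x : ZMod N → Bool) : l1 (fun i => !x i) = l0 x :=
  maxRun_not x true

section LeftStep

variable {x : ZMod N → Bool} {s : ℕ}

theorem leftStep_apply (x : ZMod N → Bool) (i : ZMod N) :
    leftStep x i = !(x i && x (i - 1)) := by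
  unfold leftStep
  cases x i <;> cases x (i - 1) <;> rfl

theorem HasRun.leftStep_false (h : HasRun x true (s + 1)) : HasRun (leftStep x) false s := by
  obtain ⟨i, hi⟩ := h
  refine ⟨i + 1, fun k hk => ?_⟩
  have hcur : x (i + 1 + k) = true := by
    convert hi (k + 1) (by omega) using 2; push_cast; ring
  have hprev : x (i + 1 + k - 1) = true := by
    convert hi k (by omega) using 2; ring
  simp [leftStep_apply, hcur, hprev]

theorem HasRun.of_leftStep_false (hs : 1 ≤ s) (h : HasRun (leftStep x) false s) :
    HasRun x true (s + 1) := by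
  obtain ⟨j, hj⟩ := h
  have hboth : ∀ m < s, x (j + m) = true ∧ x (j + m - 1) = true := fun m hm => by
    simpa [leftStep_apply] using hj m hm
  refine ⟨j - 1, fun k hk => ?_⟩
  cases k with
  | zero => simpa using (hboth 0 hs).2
  | succ m => simpa [sub_add_add_cancel, add_comm] using (hboth m (by omega)).1

theorem HasRun.leftStep_true (h : HasRun x false s) : HasRun (leftStep x) true s :=
  let ⟨i, hi⟩ := h
  ⟨i, fun k hk => by simp [leftStep_apply, hi k hk]⟩

theorem l0_leftStep (h1 : 1 ≤ l1 x) (hlt : l1 x < N) : l0 (leftStep x) = l1 x - 1 := by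
  refine le_antisymm (not_lt.1 fun hgt => ?_) (le_maxRun_s2 (by omega) ?_)
  · have hlong : HasRun x true (l1 x + 1) :=
      ((hasRun_maxRun (leftStep x) false).mono (Nat.le_of_pred_lt hgt)).of_leftStep_false h1
    exact (le_maxRun_s2 hlt hlong).not_gt (Nat.lt_succ_self _)
  · have hrun : HasRun x true (l1 x - 1 + 1) := (Nat.sub_add_cancel h1).symm ▸ hasRun_maxRun x true
    exact hrun.leftStep_false

theorem l0_le_l1_leftStep (x : ZMod N → Bool) : l0 x ≤ l1 (leftStep x) :=
  le_maxRun_s2 (maxRun_le x false) (hasRun_maxRun x false).leftStep_true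

theorem lmin_leftStep (h1 : 1 ≤ l1 x) (h10 : l1 x ≤ l0 x) : lmin (leftStep x) = l1 x - 1 := by
  have hN : 0 < N := h1.trans (h10.trans (maxRun_le x false))
  obtain ⟨i, hi⟩ := hasRun_maxRun x false
  have hi0 : x i = false := by simpa using hi 0 (h1.trans h10)
  have hlt : l1 x < N := maxRun_lt hN (j := i) (by simp [hi0])
  have := l0_le_l1_leftStep x
  rw [lmin, l0_leftStep h1 hlt]
  omega

end LeftStep

theorem rightStep_eq_not_leftStep_not (x : ZMod N → Bool) :
    rightStep x = fun i => !leftStep (fun j => !x j) (i + 1) := by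
  funext i
  simp only [rightStep, leftStep_apply, add_sub_cancel_right]
  cases x i <;> cases x (i + 1) <;> rfl

theorem lmin_rightStep (x : ZMod N → Bool) :
    lmin (rightStep x) = lmin (leftStep fun j => !x j) := by
  simp only [lmin, l0, l1, rightStep_eq_not_leftStep_not, maxRun_not, maxRun_comp_add_right]
  exact min_comm _ _

theorem lmin_longClusterStep {x : ZMod N → Bool} (h : 1 ≤ lmin x) :
    lmin (longClusterStep x) = lmin x - 1 := by
  have h0 : 1 ≤ l0 x := h.trans (min_le_left _ _)
  have h1 : 1 ≤ l1 x := h.trans (min_le_right _ _)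
  unfold longClusterStep
  split_ifs with h10
  · rw [lmin_leftStep h1 h10, lmin, min_eq_right h10]
  · rw [lmin_rightStep, lmin_leftStep (by rwa [l1_not]) (by rw [l0_not, l1_not]; omega),
      l1_not, lmin, min_eq_left (by omega)]

theorem lmin_iterate_longClusterStep (x : ZMod N → Bool) :
    lmin (longClusterStep^[lmin x] x) = 0 := by
  generalize hm : lmin x = m
  induction m generalizing x with
  | zero => exact hm
  | succ m ih => exact ih _ (by rw [lmin_longClusterStep (by omega), hm]; rfl)

theorem longCluster_decreases_general (x : ZMod N → Bool) (h : 1 ≤ lmin x) :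
    lmin (longClusterStep x) = lmin x - 1 ∧
    lmin (longClusterStep^[lmin x] x) = 0 :=
  ⟨lmin_longClusterStep h, lmin_iterate_longClusterStep x⟩

/-- under the long cluster rule `S₀`, one step decreases `l` by exactly one
whenever `l(x) ≥ 1`; consequently after exactly `l(x)` steps the system reaches `l = 0`. -/
theorem longCluster_decreases (hN : 0 < N) (x : ZMod N → Bool) (h : 1 ≤ lmin x) :
    lmin (longClusterStep x) = lmin x - 1 ∧
    lmin (longClusterStep^[lmin x] x) = 0 :=
  longCluster_decreases_general x h

end ContourChain
end

section
/- A state x ∈ {0,1}^N of the binary closed chain is a state of free movement (i.e., no competitions occur at x and at all subsequent states under the dynamics) if and only if l(x) = 0, i.e., x is constant (all zeros or all ones). -/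
open Function

namespace ContourChain

lemma exists_competes_of_not_const (hN : 0 < N) (x : ZMod N → Bool)
    (h : ¬ ∃ b, ∀ i, x i = b) : ∃ i, Competes x i := by
  haveI : NeZero N := ⟨hN.ne'⟩
  by_contra hc
  push_neg at hc
  simp only [Competes, not_and] at hc
  push_neg at h
  obtain ⟨i, hi⟩ := h true
  obtain ⟨j, hj⟩ := h false
  simp only [ne_eq, Bool.not_eq_true] at hi
  simp only [ne_eq, Bool.not_eq_false] at hj
  have key : ∀ n : ℕ, x (i + (n : ZMod N)) = false := by
    intro n
    induction n with
    | zero => simpa using hi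
    | succ n ih =>
      have h2 := hc (i + (n : ZMod N)) ih
      rw [Bool.not_eq_true] at h2
      rw [show ((n + 1 : ℕ) : ZMod N) = (n : ZMod N) + 1 by push_cast; ring,
        ← add_assoc]
      exact h2
  obtain ⟨m, hm⟩ := ZMod.natCast_zmod_surjective (n := N) (j - i)
  have h3 := key m
  rw [hm, add_sub_cancel, hj] at h3
  exact absurd h3 (by simp)

lemma isFree_of_const (x : ZMod N → Bool) (h : ∃ b, ∀ i, x i = b) : IsFree x := by
  have hconst : ∀ n : ℕ, ∃ c, ∀ i, flipAll^[n] x i = c := by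
    intro n
    induction n with
    | zero => exact h
    | succ n ih =>
      obtain ⟨c, hc⟩ := ih
      exact ⟨!c, fun i => by simp [Function.iterate_succ_apply', flipAll, hc]⟩
  intro n i ⟨h1, h2⟩
  obtain ⟨c, hc⟩ := hconst n
  rw [hc i] at h1
  rw [hc (i + 1)] at h2
  rw [h1] at h2
  exact absurd h2 (by simp)

lemma maxRun_eq_zero (hN : 0 < N) (x : ZMod N → Bool) (b : Bool)
    (hb : ∀ i, x i = b) : maxRun x (!b) = 0 := by
  haveI : NeZero N := ⟨hN.ne'⟩
  have hset : {s : ℕ | s ≤ N ∧ ∃ i : ZMod N, ∀ k : ℕ, k < s → x (i + (k : ZMod N)) = !b}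
      = {0} := by
    ext s
    simp only [Set.mem_setOf_eq, Set.mem_singleton_iff]
    constructor
    · rintro ⟨_, i, hi⟩
      by_contra hs
      have := hi 0 (Nat.pos_of_ne_zero hs)
      rw [hb (i + (0 : ℕ))] at this
      exact absurd this (by simp)
    · rintro rfl
      exact ⟨Nat.zero_le _, 0, fun k hk => absurd hk (by omega)⟩
  rw [maxRun, hset, csSup_singleton]

lemma one_le_maxRun (hN : 0 < N) (x : ZMod N → Bool) (b : Bool)
    (h : ∃ i, x i = b) : 1 ≤ maxRun x b := by
  obtain ⟨i, hi⟩ := h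
  apply le_csSup ⟨N, fun s hs => hs.1⟩
  refine ⟨hN, i, fun k hk => ?_⟩
  interval_cases k
  simpa using hi

lemma lmin_eq_zero_iff (hN : 0 < N) (x : ZMod N → Bool) :
    lmin x = 0 ↔ ∃ b, ∀ i, x i = b := by
  constructor
  · intro h
    by_contra hc
    have hc' := hc
    push_neg at hc'
    obtain ⟨i, hi⟩ := hc' true
    obtain ⟨j, hj⟩ := hc' false
    simp only [ne_eq, Bool.not_eq_true] at hi
    simp only [ne_eq, Bool.not_eq_false] at hj
    have h0 : 1 ≤ l0 x := one_le_maxRun hN x false ⟨i, hi⟩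
    have h1 : 1 ≤ l1 x := one_le_maxRun hN x true ⟨j, hj⟩
    simp only [lmin] at h
    omega
  · rintro ⟨b, hb⟩
    have := maxRun_eq_zero hN x b hb
    cases b with
    | false => simp only [lmin, l1]; simp only [Bool.not_false] at this; omega
    | true => simp only [lmin, l0]; simp only [Bool.not_true] at this; omega

/-- `x` is a state of free movement iff `l(x) = 0`, iff `x` is constant. -/
theorem isFree_iff (hN : 0 < N) (x : ZMod N → Bool) :
    (IsFree x ↔ lmin x = 0) ∧ (lmin x = 0 ↔ ∃ b, ∀ i, x i = b) := by
  refine ⟨?_, lmin_eq_zero_iff hN x⟩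
  rw [lmin_eq_zero_iff hN x]
  constructor
  · intro hfree
    by_contra hc
    obtain ⟨i, hi⟩ := exists_competes_of_not_const hN x hc
    exact hfree 0 i (by simpa using hi)
  · exact isFree_of_const x

end ContourChain
end

section
/- If x is a state of the binary closed chain with l0(x) ≥ 1 and the longest 0-cluster of x occupies positions i0, i0+1, …, i0+s−1 (cyclically, s = l0(x)), then under any competition resolution rule the successor state x' contains a cyclic block of consecutive 1's of length at least s − 1 in positions i0, …, i0+s−2; hence l1(x') ≥ l0(x) − 1. -/
open Function

namespace ContourChain

/-- if the longest 0-cluster of `x` occupies positions `i0, …, i0+s-1`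
(`s = l0 x ≥ 1`), then under any rule the successor `x'` has 1's in positions
`i0, …, i0+s-2`; hence `l1 x' ≥ l0 x - 1`. -/
theorem ones_block_in_successor (hN : 0 < N) (x x' : ZMod N → Bool)
    (s : ℕ) (i0 : ZMod N) (hs : s = l0 x) (hs1 : 1 ≤ s)
    (hblock : ∀ k : ℕ, k < s → x (i0 + (k : ZMod N)) = false)
    (hleft : x (i0 - 1) = true) (hright : x (i0 + (s : ZMod N)) = true)
    (hstep : IsStep x x') :
    (∀ k : ℕ, k + 1 < s → x' (i0 + (k : ZMod N)) = true) ∧ l0 x - 1 ≤ l1 x' := by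
  have hmain : ∀ k : ℕ, k + 1 < s → x' (i0 + (k : ZMod N)) = true := by
    intro k hk
    by_contra h
    have hx : x (i0 + (k : ZMod N)) = false := hblock k (by omega)
    have hx' : x' (i0 + (k : ZMod N)) = x (i0 + (k : ZMod N)) := by
      rw [hx]; simpa using h
    rcases hstep.1 _ hx' with hc | hc
    · have : x (i0 + (k : ZMod N) + 1) = true := hc.2
      have hb : x (i0 + ((k + 1 : ℕ) : ZMod N)) = false := hblock (k + 1) hk
      rw [show (((k : ℕ) + 1 : ℕ) : ZMod N) = (k : ZMod N) + 1 by push_cast; ring,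
        ← add_assoc] at hb
      rw [hb] at this; exact Bool.false_ne_true this
    · have : x (i0 + (k : ZMod N) - 1 + 1) = true := hc.2
      rw [sub_add_cancel, hx] at this; exact Bool.false_ne_true this
  refine ⟨hmain, ?_⟩
  -- s ≤ N
  have hsN : s ≤ N := by
    rw [hs]
    unfold l0 maxRun
    apply csSup_le
    · exact ⟨0, Nat.zero_le _, i0, fun k hk => absurd hk (Nat.not_lt_zero k)⟩
    · exact fun t ht => ht.1
  have hmem : s - 1 ∈ {t : ℕ | t ≤ N ∧ ∃ i : ZMod N, ∀ k : ℕ, k < t →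
      x' (i + (k : ZMod N)) = true} :=
    ⟨by omega, i0, fun k hk => hmain k (by omega)⟩
  have hbdd : BddAbove {t : ℕ | t ≤ N ∧ ∃ i : ZMod N, ∀ k : ℕ, k < t →
      x' (i + (k : ZMod N)) = true} := ⟨N, fun t ht => ht.1⟩
  have : s - 1 ≤ l1 x' := le_csSup hbdd hmem
  omega

end ContourChain
end

section
/- If x is a state of the binary closed chain with l1(x) ≥ 1, then under any competition resolution rule the successor state x' satisfies l0(x') ≥ l1(x) − 1. -/
open Function

namespace ContourChain

/-- if `l1 x ≥ 1` then under any competition resolution rule the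
successor `x'` satisfies `l0 x' ≥ l1 x - 1`. -/
theorem l0_succ_ge (hN : 0 < N) (x x' : ZMod N → Bool)
    (h1 : 1 ≤ l1 x) (hstep : IsStep x x') :
    l1 x - 1 ≤ l0 x' := by
  haveI : NeZero N := ⟨hN.ne'⟩
  set s := l1 x with hs
  -- the defining set for l1 x
  have hbdd : ∀ (y : ZMod N → Bool) (b : Bool), BddAbove
      {t : ℕ | t ≤ N ∧ ∃ i : ZMod N, ∀ k : ℕ, k < t → y (i + (k : ZMod N)) = b} :=
    fun y b => ⟨N, fun t ht => ht.1⟩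
  have hmem : s ∈ {t : ℕ | t ≤ N ∧ ∃ i : ZMod N, ∀ k : ℕ, k < t →
      x (i + (k : ZMod N)) = true} := by
    have hne : {t : ℕ | t ≤ N ∧ ∃ i : ZMod N, ∀ k : ℕ, k < t →
        x (i + (k : ZMod N)) = true}.Nonempty :=
      ⟨0, Nat.zero_le _, 0, fun k hk => absurd hk (Nat.not_lt_zero k)⟩
    exact Nat.sSup_mem hne (hbdd x true)
  obtain ⟨hsN, i, hrun⟩ := hmem
  -- the shifted run of zeros in x'
  have hrun' : ∀ k : ℕ, k < s - 1 → x' (i + 1 + (k : ZMod N)) = false := by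
    intro k hk
    set j : ZMod N := i + 1 + (k : ZMod N) with hj
    have hxj : x j = true := by
      have := hrun (k + 1) (by omega)
      rwa [show i + ((k + 1 : ℕ) : ZMod N) = j by push_cast [hj]; ring] at this
    have hxj1 : x (j - 1) = true := by
      have := hrun k (by omega)
      rwa [show i + ((k : ℕ) : ZMod N) = j - 1 by push_cast [hj]; ring] at this
    have hnc1 : ¬ Competes x j := fun h => by simp [Competes, hxj] at h
    have hnc2 : ¬ Competes x (j - 1) := fun h => by simp [Competes, hxj1] at h
    have hne : x' j ≠ x j := fun h => by
      rcases hstep.1 j h with h' | h'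
      · exact hnc1 h'
      · exact hnc2 h'
    cases hx' : x' j with
    | false => rfl
    | true => exact absurd (by rw [hx', hxj]) hne
  have : s - 1 ∈ {t : ℕ | t ≤ N ∧ ∃ i : ZMod N, ∀ k : ℕ, k < t →
      x' (i + (k : ZMod N)) = false} :=
    ⟨le_trans (Nat.sub_le _ _) hsN, i + 1, hrun'⟩
  exact le_csSup (hbdd x' false) this

end ContourChain
end

section
/- Consider the 4-state Markov chain on macrostates G1, G2, G3, G4 with transition matrix (rows indexed by current state): row 1 = (o(ε), 1−3ε+o(ε), 3ε+o(ε), o(ε)); row 2 = (1−3ε+o(ε), o(ε), o(ε), 3ε+o(ε)); row 3 = (0, ε+o(ε), 1−2ε+o(ε), ε+o(ε)); row 4 = (0, 1−2ε+o(ε), 2ε+o(ε), o(ε)). Then as ε → 0+, the stationary distribution (p1,p2,p3,p4) satisfies p1 = 2/7 + o(1), p2 = 2/7 + o(1), p3 = 3/7 + o(1), p4 = o(1). -/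
open Filter Topology Asymptotics

/-- the 4-state Markov chain on the macrostates `G1, G2, G3, G4` with the
given ε-asymptotic transition probabilities has stationary distribution converging to
`(2/7, 2/7, 3/7, 0)` as `ε → 0⁺`. -/
theorem stationary_limit (ε0 : ℝ) (hε0 : 0 < ε0)
    (P : ℝ → Fin 4 → Fin 4 → ℝ) (p : ℝ → Fin 4 → ℝ)
    (hP : ∀ ε ∈ Set.Ioo (0 : ℝ) ε0, (∀ i j, 0 ≤ P ε i j) ∧ ∀ i, ∑ j, P ε i j = 1)
    (hstat : ∀ ε ∈ Set.Ioo (0 : ℝ) ε0,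
      (∀ i, 0 ≤ p ε i) ∧ (∑ i, p ε i = 1) ∧ ∀ j, ∑ i, p ε i * P ε i j = p ε j)
    (h00 : (fun ε => P ε 0 0) =o[𝓝[>] (0 : ℝ)] fun ε => ε)
    (h01 : (fun ε => P ε 0 1 - (1 - 3 * ε)) =o[𝓝[>] (0 : ℝ)] fun ε => ε)
    (h02 : (fun ε => P ε 0 2 - 3 * ε) =o[𝓝[>] (0 : ℝ)] fun ε => ε)
    (h03 : (fun ε => P ε 0 3) =o[𝓝[>] (0 : ℝ)] fun ε => ε)
    (h10 : (fun ε => P ε 1 0 - (1 - 3 * ε)) =o[𝓝[>] (0 : ℝ)] fun ε => ε)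
    (h11 : (fun ε => P ε 1 1) =o[𝓝[>] (0 : ℝ)] fun ε => ε)
    (h12 : (fun ε => P ε 1 2) =o[𝓝[>] (0 : ℝ)] fun ε => ε)
    (h13 : (fun ε => P ε 1 3 - 3 * ε) =o[𝓝[>] (0 : ℝ)] fun ε => ε)
    (h20 : ∀ ε ∈ Set.Ioo (0 : ℝ) ε0, P ε 2 0 = 0)
    (h21 : (fun ε => P ε 2 1 - ε) =o[𝓝[>] (0 : ℝ)] fun ε => ε)
    (h22 : (fun ε => P ε 2 2 - (1 - 2 * ε)) =o[𝓝[>] (0 : ℝ)] fun ε => ε)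
    (h23 : (fun ε => P ε 2 3 - ε) =o[𝓝[>] (0 : ℝ)] fun ε => ε)
    (h30 : ∀ ε ∈ Set.Ioo (0 : ℝ) ε0, P ε 3 0 = 0)
    (h31 : (fun ε => P ε 3 1 - (1 - 2 * ε)) =o[𝓝[>] (0 : ℝ)] fun ε => ε)
    (h32 : (fun ε => P ε 3 2 - 2 * ε) =o[𝓝[>] (0 : ℝ)] fun ε => ε)
    (h33 : (fun ε => P ε 3 3) =o[𝓝[>] (0 : ℝ)] fun ε => ε) :
    Tendsto (fun ε => p ε 0) (𝓝[>] (0 : ℝ)) (𝓝 (2 / 7)) ∧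
    Tendsto (fun ε => p ε 1) (𝓝[>] (0 : ℝ)) (𝓝 (2 / 7)) ∧
    Tendsto (fun ε => p ε 2) (𝓝[>] (0 : ℝ)) (𝓝 (3 / 7)) ∧
    Tendsto (fun ε => p ε 3) (𝓝[>] (0 : ℝ)) (𝓝 0) := by
  have hmem : Set.Ioo (0 : ℝ) ε0 ∈ 𝓝[>] (0 : ℝ) :=
    Ioo_mem_nhdsGT_of_mem ⟨le_refl 0, hε0⟩
  -- boundedness of p
  have hb : ∀ i : Fin 4, (fun ε => p ε i) =O[𝓝[>] (0 : ℝ)] (fun _ => (1 : ℝ)) := by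
    intro i
    apply IsBigO.of_bound 1
    filter_upwards [hmem] with ε hε
    obtain ⟨hpos, hsum, _⟩ := hstat ε hε
    have h1 : p ε i ≤ 1 := by
      have := Finset.single_le_sum (f := fun j => p ε j) (fun j _ => hpos j) (Finset.mem_univ i)
      linarith
    simp only [norm_one, mul_one, Real.norm_eq_abs]
    rw [abs_of_nonneg (hpos i)]
    exact h1
  have hε1 : (fun ε : ℝ => ε) =o[𝓝[>] (0 : ℝ)] (fun _ => (1 : ℝ)) := by
    rw [isLittleO_one_iff ℝ]
    exact tendsto_id.mono_left nhdsWithin_le_nhds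
  have key : ∀ (i : Fin 4) (f g : ℝ → ℝ), (f =o[𝓝[>] (0 : ℝ)] g) →
      (fun ε => p ε i * f ε) =o[𝓝[>] (0 : ℝ)] g := by
    intro i f g hf
    simpa using (hb i).mul_isLittleO hf
  -- A := p0 - p1 → 0
  have hA0 : (fun ε => (p ε 0 - p ε 1) + 3 * ε * p ε 1) =o[𝓝[>] (0 : ℝ)] (fun ε => ε) := by
    refine ((key 0 _ _ h00).add (key 1 _ _ h10)).congr' ?_ EventuallyEq.rfl
    filter_upwards [hmem] with ε hε
    obtain ⟨_, _, hs⟩ := hstat ε hε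
    have h0 := hs 0
    rw [Fin.sum_univ_four, h20 ε hε, h30 ε hε] at h0
    linear_combination h0
  have h3ε : (fun ε : ℝ => 3 * ε) =o[𝓝[>] (0 : ℝ)] (fun _ => (1 : ℝ)) :=
    hε1.const_mul_left 3
  have hA : (fun ε => p ε 0 - p ε 1) =o[𝓝[>] (0 : ℝ)] (fun _ => (1 : ℝ)) := by
    have h2 : (fun ε => 3 * ε * p ε 1) =o[𝓝[>] (0 : ℝ)] (fun _ => (1 : ℝ)) := by
      have := key 1 (fun ε => 3 * ε) _ h3ε
      exact this.congr' (Filter.Eventually.of_forall fun ε => by ring) EventuallyEq.rfl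
    have := (hA0.trans hε1).sub h2
    exact this.congr' (Filter.Eventually.of_forall fun ε => by ring) EventuallyEq.rfl
  have TA : Tendsto (fun ε => p ε 0 - p ε 1) (𝓝[>] (0 : ℝ)) (𝓝 0) :=
    (isLittleO_one_iff ℝ).1 hA
  -- C := p3 → 0
  have hC : (fun ε => p ε 3) =o[𝓝[>] (0 : ℝ)] (fun _ => (1 : ℝ)) := by
    have t0 := (key 0 _ _ h03).trans hε1
    have t1 := (key 1 _ _ h13).trans hε1
    have t1' : (fun ε => 3 * ε * p ε 1) =o[𝓝[>] (0 : ℝ)] (fun _ => (1 : ℝ)) := by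
      have := key 1 (fun ε => 3 * ε) _ h3ε
      exact this.congr' (Filter.Eventually.of_forall fun ε => by ring) EventuallyEq.rfl
    have t2 := (key 2 _ _ h23).trans hε1
    have t2' : (fun ε => ε * p ε 2) =o[𝓝[>] (0 : ℝ)] (fun _ => (1 : ℝ)) := by
      have := key 2 (fun ε => ε) _ hε1
      exact this.congr' (Filter.Eventually.of_forall fun ε => by ring) EventuallyEq.rfl
    have t3 := (key 3 _ _ h33).trans hε1
    have hsumo := ((t0.add (t1.add t1')).add (t2.add t2')).add t3
    refine hsumo.congr' ?_ EventuallyEq.rfl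
    filter_upwards [hmem] with ε hε
    obtain ⟨_, _, hs⟩ := hstat ε hε
    have h3 := hs 3
    rw [Fin.sum_univ_four] at h3
    linear_combination h3
  have TC : Tendsto (fun ε => p ε 3) (𝓝[>] (0 : ℝ)) (𝓝 0) := (isLittleO_one_iff ℝ).1 hC
  -- B := 2 p2 - 3 p0 - 2 p3 → 0
  have hR : (fun ε => (p ε 0 * (P ε 0 2 - 3 * ε) + p ε 1 * (P ε 1 2)) +
      (p ε 2 * (P ε 2 2 - (1 - 2 * ε)) + p ε 3 * (P ε 3 2 - 2 * ε)))
      =o[𝓝[>] (0 : ℝ)] (fun ε => ε) :=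
    ((key 0 _ _ h02).add (key 1 _ _ h12)).add ((key 2 _ _ h22).add (key 3 _ _ h32))
  have TB : Tendsto (fun ε => 2 * p ε 2 - 3 * p ε 0 - 2 * p ε 3) (𝓝[>] (0 : ℝ)) (𝓝 0) := by
    refine Tendsto.congr' ?_ hR.tendsto_div_nhds_zero
    filter_upwards [hmem] with ε hε
    obtain ⟨_, _, hs⟩ := hstat ε hε
    have h2 := hs 2
    rw [Fin.sum_univ_four] at h2
    have hne : ε ≠ 0 := ne_of_gt hε.1
    rw [div_eq_iff hne]
    linear_combination h2
  -- assemble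
  have hz : Tendsto (fun ε => 2/7 * (p ε 0 - p ε 1)
      - 1/7 * (2 * p ε 2 - 3 * p ε 0 - 2 * p ε 3) - 4/7 * p ε 3) (𝓝[>] (0 : ℝ)) (𝓝 0) := by
    have := (((TA.const_mul (2/7 : ℝ)).sub (TB.const_mul (1/7 : ℝ))).sub (TC.const_mul (4/7 : ℝ)))
    simpa using this
  have T0 : Tendsto (fun ε => p ε 0) (𝓝[>] (0 : ℝ)) (𝓝 (2/7)) := by
    have hcomb : Tendsto (fun ε => 2/7 + (2/7 * (p ε 0 - p ε 1)
        - 1/7 * (2 * p ε 2 - 3 * p ε 0 - 2 * p ε 3) - 4/7 * p ε 3)) (𝓝[>] (0 : ℝ)) (𝓝 (2/7)) := by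
      have := (tendsto_const_nhds (x := (2/7 : ℝ))).add hz
      simpa using this
    refine Tendsto.congr' ?_ hcomb
    filter_upwards [hmem] with ε hε
    obtain ⟨_, hsum, _⟩ := hstat ε hε
    rw [Fin.sum_univ_four] at hsum
    linarith
  have T1 : Tendsto (fun ε => p ε 1) (𝓝[>] (0 : ℝ)) (𝓝 (2/7)) := by
    have := T0.sub TA
    simpa using this
  have T2 : Tendsto (fun ε => p ε 2) (𝓝[>] (0 : ℝ)) (𝓝 (3/7)) := by
    have hcomb : Tendsto (fun ε => 1 - p ε 0 - p ε 1 - p ε 3) (𝓝[>] (0 : ℝ))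
        (𝓝 (1 - 2/7 - 2/7 - 0)) := ((tendsto_const_nhds.sub T0).sub T1).sub TC
    have heq : (1 : ℝ) - 2/7 - 2/7 - 0 = 3/7 := by norm_num
    rw [heq] at hcomb
    refine Tendsto.congr' ?_ hcomb
    filter_upwards [hmem] with ε hε
    obtain ⟨_, hsum, _⟩ := hstat ε hε
    rw [Fin.sum_univ_four] at hsum
    linarith
  exact ⟨T0, T1, T2, TC⟩
end

section
/- Consider a Markov chain on states S_0, S_1, …, S_m whose transition probabilities satisfy, as ε → 0+: P(S_0 → S_0) = 1 − Nε + o(ε), P(S_0 → S_1) = Nε + o(ε), P(S_0 → other) = o(ε); and P(S_i → S_{i−1}) = 1 − o(1) for each i ≥ 1 (uniformly as ε → 0). Then the stationary probabilities satisfy P_0 = 1 − Nε + o(ε), P_1 = Nε + o(ε), and P_i = o(ε) for i ≥ 2. -/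
/-!
Cut the chain between `{0, …, i-1}` and `{i, …, m}`. In a stationary regime the probability
flow across the cut is the same in both directions: the flow down is at least `q i · P(i → i-1)`,
while the flow up is at most `P(0 → {i, …, m}) + ∑_{0<a<i} q a · (1 - P(a → a-1))`.
Induction on `i` then gives `q i = O(ε)` for `i ≥ 1` and `q i = o(ε)` for `i ≥ 2`.
Stationarity at state `1` gives `q 1 = q 0 · P(0 → 1) + o(ε)` with `q 0 = 1 - O(ε)`,
and `q 0` follows from normalization.
-/

open Filter Topology Asymptotics Finset Matrix

namespace Matrix

variable {n : Type*} [Fintype n]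

def IsStationaryDistribution (M : Matrix n n ℝ) (x : n → ℝ) : Prop :=
  0 ≤ x ∧ ∑ i, x i = 1 ∧ x ᵥ* M = x

theorem IsStationaryDistribution.le_one {M : Matrix n n ℝ} {x : n → ℝ}
    (hx : IsStationaryDistribution M x) (i : n) : x i ≤ 1 :=
  hx.2.1 ▸ single_le_sum (fun j _ => hx.1 j) (mem_univ i)

variable [DecidableEq n] {M : Matrix n n ℝ} {x : n → ℝ}

theorem sum_le_one_sub_of_mem_rowStochastic (hM : M ∈ rowStochastic ℝ n) (a : n)
    {s : Finset n} {b : n} (hb : b ∉ s) : ∑ j ∈ s, M a j ≤ 1 - M a b := by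
  have h := sum_le_sum_of_subset_of_nonneg (subset_univ (insert b s))
    fun j _ _ => hM.1 a j
  rw [sum_insert hb, sum_row_of_mem_rowStochastic hM a] at h
  linarith

/-- The probability flow out of `A` equals the flow into `A`. -/
theorem sum_mul_sum_compl_eq_of_vecMul_eq_self (hM : ∀ i, ∑ j, M i j = 1)
    (hx : x ᵥ* M = x) (A : Finset n) :
    ∑ a ∈ A, x a * ∑ j ∈ Aᶜ, M a j = ∑ a ∈ Aᶜ, x a * ∑ j ∈ A, M a j := by
  have hout : ∑ a ∈ A, x a =
      ∑ a ∈ A, x a * ∑ j ∈ A, M a j + ∑ a ∈ A, x a * ∑ j ∈ Aᶜ, M a j := by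
    rw [← sum_add_distrib]
    refine sum_congr rfl fun a _ => ?_
    rw [← mul_add, sum_add_sum_compl, hM, mul_one]
  have hin : ∑ a ∈ A, x a =
      ∑ a ∈ A, x a * ∑ j ∈ A, M a j + ∑ a ∈ Aᶜ, x a * ∑ j ∈ A, M a j := by
    conv_lhs => rw [← hx]
    simp only [vecMul, dotProduct, mul_sum]
    rw [sum_comm, sum_add_sum_compl]
  linarith

theorem mul_le_sum_mul_sum_compl_of_vecMul_eq_self (hM : M ∈ rowStochastic ℝ n)
    (hx₀ : 0 ≤ x) (hx : x ᵥ* M = x) {A : Finset n} {i k : n} (hi : i ∉ A) (hk : k ∈ A) :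
    x i * M i k ≤ ∑ a ∈ A, x a * ∑ j ∈ Aᶜ, M a j := by
  rw [sum_mul_sum_compl_eq_of_vecMul_eq_self (sum_row_of_mem_rowStochastic hM) hx]
  calc x i * M i k ≤ x i * ∑ j ∈ A, M i j :=
        mul_le_mul_of_nonneg_left (single_le_sum (fun j _ => hM.1 i j) hk) (hx₀ i)
    _ ≤ ∑ a ∈ Aᶜ, x a * ∑ j ∈ A, M a j :=
        single_le_sum (f := fun a => x a * ∑ j ∈ A, M a j)
          (fun a _ => mul_nonneg (hx₀ a) (sum_nonneg fun j _ => hM.1 a j)) (mem_compl.2 hi)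

theorem IsStationaryDistribution.mul_sub_one_le {m : ℕ}
    {M : Matrix (Fin (m + 1)) (Fin (m + 1)) ℝ} {x : Fin (m + 1) → ℝ}
    (hM : M ∈ rowStochastic ℝ (Fin (m + 1)))
    (hx : IsStationaryDistribution M x) {i : Fin (m + 1)} (hi : i ≠ 0) :
    x i * M i (i - 1) ≤ ∑ j ∈ Ici i, M 0 j + ∑ a ∈ Ioo 0 i, x a * (1 - M a (a - 1)) := by
  have hi₀ : 0 < i := Fin.pos_iff_ne_zero.2 hi
  have hcompl : (Iio i)ᶜ = Ici i := by ext; simp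
  calc x i * M i (i - 1) ≤ ∑ a ∈ Iio i, x a * ∑ j ∈ (Iio i)ᶜ, M a j :=
        mul_le_sum_mul_sum_compl_of_vecMul_eq_self hM hx.1 hx.2.2 (by simp)
          (by simpa using Fin.sub_one_lt_iff.2 hi₀)
    _ = x 0 * ∑ j ∈ Ici i, M 0 j + ∑ a ∈ Ioo 0 i, x a * ∑ j ∈ Ici i, M a j := by
        rw [hcompl, ← Ico_bot, bot_eq_zero, ← Ioo_insert_left hi₀, sum_insert (by simp)]
    _ ≤ ∑ j ∈ Ici i, M 0 j + ∑ a ∈ Ioo 0 i, x a * (1 - M a (a - 1)) := by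
        gcongr with a ha
        · exact mul_le_of_le_one_left (sum_nonneg fun j _ => hM.1 0 j) (hx.le_one 0)
        · exact hx.1 a
        · have ha' := mem_Ioo.1 ha
          refine sum_le_one_sub_of_mem_rowStochastic hM a fun h => ?_
          exact (mem_Ici.1 h).not_gt ((Fin.sub_one_lt_iff.2 ha'.1).trans ha'.2)

end Matrix

theorem Fin.two_le_val_of_ne {m : ℕ} (hm : 1 ≤ m) {k : Fin (m + 1)} (h₀ : k ≠ 0) (h₁ : k ≠ 1) :
    2 ≤ (k : ℕ) := by
  have hv₁ : ((1 : Fin (m + 1)) : ℕ) = 1 := by rw [Fin.val_one', Nat.mod_eq_of_lt (by omega)]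
  have : (k : ℕ) ≠ 0 := Fin.val_ne_iff.2 h₀
  have : (k : ℕ) ≠ 1 := fun h => h₁ (Fin.ext (h.trans hv₁.symm))
  omega

theorem Asymptotics.isBigO_of_mul_le {α : Type*} {l : Filter α} {f u F : α → ℝ}
    (hf : ∀ᶠ x in l, 0 ≤ f x) (hu : Tendsto u l (𝓝 1)) (h : ∀ᶠ x in l, f x * u x ≤ F x) :
    f =O[l] F := by
  refine IsBigO.of_bound 2 ?_
  filter_upwards [hf, h, hu.eventually (eventually_ge_nhds (by norm_num : (1 : ℝ) / 2 < 1))]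
    with x hfx hx hux
  rw [Real.norm_of_nonneg hfx]
  calc f x ≤ 2 * (f x * u x) := by nlinarith
    _ ≤ 2 * ‖F x‖ := by gcongr; exact hx.trans (Real.le_norm_self _)

section DownwardChain

variable {α : Type*} {l : Filter α} {g : α → ℝ} {m : ℕ}
  {P : α → Matrix (Fin (m + 1)) (Fin (m + 1)) ℝ} {q : α → Fin (m + 1) → ℝ}

theorem isBigO_stationary_and_isLittleO_of_two_le
    (hP : ∀ᶠ t in l, P t ∈ rowStochastic ℝ (Fin (m + 1)))
    (hq : ∀ᶠ t in l, IsStationaryDistribution (P t) (q t))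
    (hdown : ∀ i : Fin (m + 1), i ≠ 0 → Tendsto (fun t => P t i (i - 1)) l (𝓝 1))
    (hrow : ∀ j : Fin (m + 1), j ≠ 0 → (fun t => P t 0 j) =O[l] g)
    (hrow₂ : ∀ j : Fin (m + 1), 2 ≤ (j : ℕ) → (fun t => P t 0 j) =o[l] g)
    (i : Fin (m + 1)) (hi : i ≠ 0) :
    (fun t => q t i) =O[l] g ∧ (2 ≤ (i : ℕ) → (fun t => q t i) =o[l] g) := by
  induction i using WellFoundedLT.induction with
  | _ i ih =>
  have hsource : (fun t => ∑ j ∈ Ici i, P t 0 j) =O[l] g :=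
    IsBigO.fun_sum fun j hj =>
      hrow j ((Fin.pos_iff_ne_zero.2 hi).trans_le (mem_Ici.1 hj)).ne'
  have hsource₂ (hi₂ : 2 ≤ (i : ℕ)) : (fun t => ∑ j ∈ Ici i, P t 0 j) =o[l] g :=
    IsLittleO.fun_sum fun j hj => hrow₂ j (hi₂.trans (Fin.le_iff_val_le_val.1 (mem_Ici.1 hj)))
  have hleak : (fun t => ∑ a ∈ Ioo 0 i, q t a * (1 - P t a (a - 1))) =o[l] g := by
    refine IsLittleO.fun_sum fun a ha => ?_
    obtain ⟨ha₀, hai⟩ := mem_Ioo.1 ha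
    have hgap : Tendsto (fun t => 1 - P t a (a - 1)) l (𝓝 0) := by
      simpa using (tendsto_const_nhds (x := (1 : ℝ))).sub (hdown a ha₀.ne')
    simpa using (ih a hai ha₀.ne').1.mul_isLittleO (isLittleO_one_iff ℝ |>.2 hgap)
  have hqi : (fun t => q t i) =O[l]
      fun t => ∑ j ∈ Ici i, P t 0 j + ∑ a ∈ Ioo 0 i, q t a * (1 - P t a (a - 1)) :=
    isBigO_of_mul_le (hq.mono fun t ht => ht.1 i) (hdown i hi)
      ((hP.and hq).mono fun t ht => ht.2.mul_sub_one_le ht.1 hi)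
  exact ⟨hqi.trans (hsource.add hleak.isBigO),
    fun hi₂ => hqi.trans_isLittleO ((hsource₂ hi₂).add hleak)⟩

theorem isLittleO_stationary_zero_add_one_sub_one (hm : 1 ≤ m)
    (hq : ∀ᶠ t in l, IsStationaryDistribution (P t) (q t))
    (ho : ∀ k : Fin (m + 1), 2 ≤ (k : ℕ) → (fun t => q t k) =o[l] g) :
    (fun t => q t 0 + q t 1 - 1) =o[l] g := by
  have h₁ : (1 : Fin (m + 1)) ∈ univ.erase 0 :=
    mem_erase.2 ⟨Fin.one_eq_zero_iff.not.2 (by omega), mem_univ 1⟩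
  have hrest : (fun t => ∑ k ∈ (univ.erase 0).erase 1, q t k) =o[l] g :=
    IsLittleO.fun_sum fun k hk => ho k <| Fin.two_le_val_of_ne hm
      (mem_erase.1 (mem_erase.1 hk).2).1 (mem_erase.1 hk).1
  refine hrest.neg_left.congr' ?_ EventuallyEq.rfl
  filter_upwards [hq] with t ht
  have hsum := ht.2.1
  rw [← add_sum_erase _ _ (mem_univ 0), ← add_sum_erase _ _ h₁] at hsum
  linarith

theorem isLittleO_stationary_one_sub_mul (hm : 1 ≤ m)
    (hP : ∀ᶠ t in l, P t ∈ rowStochastic ℝ (Fin (m + 1)))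
    (hq : ∀ᶠ t in l, IsStationaryDistribution (P t) (q t))
    (hdown : ∀ i : Fin (m + 1), i ≠ 0 → Tendsto (fun t => P t i (i - 1)) l (𝓝 1))
    (hO : (fun t => q t 1) =O[l] g)
    (ho : ∀ k : Fin (m + 1), 2 ≤ (k : ℕ) → (fun t => q t k) =o[l] g) :
    (fun t => q t 1 - q t 0 * P t 0 1) =o[l] g := by
  have hcol : ∀ᶠ t in l, ∑ k ∈ univ.erase 0, q t k * P t k 1 = q t 1 - q t 0 * P t 0 1 := by
    filter_upwards [hq] with t ht
    have h := congrFun ht.2.2 1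
    rw [vecMul, dotProduct, ← add_sum_erase _ _ (mem_univ 0)] at h
    linarith
  refine IsLittleO.congr' (IsLittleO.fun_sum fun k hk => ?_) hcol EventuallyEq.rfl
  by_cases hk₁ : k = 1
  · subst hk₁
    have h₁ : (1 : Fin (m + 1)) ≠ 0 := Fin.one_eq_zero_iff.not.2 (by omega)
    have hgap : Tendsto (fun t => 1 - P t 1 0) l (𝓝 0) := by
      have hdown₁ := hdown 1 h₁
      rw [sub_self] at hdown₁
      simpa using (tendsto_const_nhds (x := (1 : ℝ))).sub hdown₁
    have hstay : Tendsto (fun t => P t 1 1) l (𝓝 0) :=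
      tendsto_of_tendsto_of_tendsto_of_le_of_le' tendsto_const_nhds hgap
        (hP.mono fun t ht => ht.1 1 1)
        (hP.mono fun t ht => by
          simpa using
            sum_le_one_sub_of_mem_rowStochastic ht 1 (s := {1}) (by simpa using h₁.symm))
    simpa using hO.mul_isLittleO (isLittleO_one_iff ℝ |>.2 hstay)
  · have hbdd : (fun t => P t k 1) =O[l] fun _ => (1 : ℝ) := by
      refine IsBigO.of_bound 1 ?_
      filter_upwards [hP] with t ht
      rw [Real.norm_of_nonneg (ht.1 k 1)]
      simpa using le_one_of_mem_rowStochastic ht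
    simpa using (ho k (Fin.two_le_val_of_ne hm (mem_erase.1 hk).1 hk₁)).mul_isBigO hbdd

end DownwardChain

theorem stationary_asymptotics_general (N m : ℕ) (hm : 1 ≤ m)
    (ε0 : ℝ) (hε0 : 0 < ε0)
    (P : ℝ → Fin (m + 1) → Fin (m + 1) → ℝ) (q : ℝ → Fin (m + 1) → ℝ)
    (hP : ∀ ε ∈ Set.Ioo (0 : ℝ) ε0, (∀ i j, 0 ≤ P ε i j) ∧ ∀ i, ∑ j, P ε i j = 1)
    (hstat : ∀ ε ∈ Set.Ioo (0 : ℝ) ε0,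
      (∀ i, 0 ≤ q ε i) ∧ (∑ i, q ε i = 1) ∧ ∀ j, ∑ i, q ε i * P ε i j = q ε j)
    (h01 : (fun ε => P ε 0 1 - N * ε) =o[𝓝[>] (0 : ℝ)] fun ε => ε)
    (h0j : ∀ j : Fin (m + 1), 2 ≤ (j : ℕ) →
      (fun ε => P ε 0 j) =o[𝓝[>] (0 : ℝ)] fun ε => ε)
    (hdown : ∀ i : Fin (m + 1), i ≠ 0 →
      Tendsto (fun ε => P ε i (i - 1)) (𝓝[>] (0 : ℝ)) (𝓝 1)) :
    ((fun ε => q ε 0 - (1 - N * ε)) =o[𝓝[>] (0 : ℝ)] fun ε => ε) ∧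
    ((fun ε => q ε 1 - N * ε) =o[𝓝[>] (0 : ℝ)] fun ε => ε) ∧
    ∀ i : Fin (m + 1), 2 ≤ (i : ℕ) →
      (fun ε => q ε i) =o[𝓝[>] (0 : ℝ)] fun ε => ε := by
  have hsmall : ∀ᶠ ε in 𝓝[>] (0 : ℝ), ε ∈ Set.Ioo 0 ε0 := Ioo_mem_nhdsGT hε0
  have hstoch : ∀ᶠ ε in 𝓝[>] (0 : ℝ), P ε ∈ rowStochastic ℝ (Fin (m + 1)) :=
    hsmall.mono fun ε hε => mem_rowStochastic_iff_sum.2 (hP ε hε)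
  have hstationary : ∀ᶠ ε in 𝓝[>] (0 : ℝ), IsStationaryDistribution (P ε) (q ε) :=
    hsmall.mono fun ε hε => let ⟨h₀, h₁, h₂⟩ := hstat ε hε; ⟨h₀, h₁, funext h₂⟩
  have hP01 : (fun ε => P ε 0 1) =O[𝓝[>] (0 : ℝ)] fun ε => ε :=
    (h01.isBigO.add ((isBigO_refl _ _).const_mul_left (N : ℝ))).congr_left fun ε => by ring
  have hrow (j : Fin (m + 1)) (hj : j ≠ 0) : (fun ε => P ε 0 j) =O[𝓝[>] (0 : ℝ)] fun ε => ε := by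
    by_cases hj₁ : j = 1
    · exact hj₁ ▸ hP01
    · exact (h0j j (Fin.two_le_val_of_ne hm hj hj₁)).isBigO
  have hq := isBigO_stationary_and_isLittleO_of_two_le hstoch hstationary hdown hrow h0j
  have ho (k : Fin (m + 1)) (hk : 2 ≤ (k : ℕ)) : (fun ε => q ε k) =o[𝓝[>] (0 : ℝ)] fun ε => ε :=
    (hq k fun h => by simp [h] at hk).2 hk
  have hq₀₁ := isLittleO_stationary_zero_add_one_sub_one hm hstationary ho
  have hq₁ : (fun ε => q ε 1 - N * ε) =o[𝓝[>] (0 : ℝ)] fun ε => ε := by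
    have hO₁ := (hq 1 (Fin.one_eq_zero_iff.not.2 (by omega))).1
    have hq₀ : (fun ε => 1 - q ε 0) =O[𝓝[>] (0 : ℝ)] fun ε => ε :=
      (hq₀₁.isBigO.neg_left.add hO₁).congr_left fun ε => by ring
    have hP01' : (fun ε => P ε 0 1) =o[𝓝[>] (0 : ℝ)] fun _ => (1 : ℝ) :=
      (isLittleO_one_iff ℝ).2 (hP01.trans_tendsto (tendsto_nhdsWithin_of_tendsto_nhds tendsto_id))
    refine ((isLittleO_stationary_one_sub_mul hm hstoch hstationary hdown hO₁ ho).sub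
      (by simpa using hq₀.mul_isLittleO hP01') |>.add h01).congr_left fun ε => by ring
  exact ⟨(hq₀₁.sub hq₁).congr_left fun ε => by ring, hq₁, ho⟩

/-- for a parametric family of irreducible Markov chains on states
`S_0, …, S_m` with `P(S_0 → S_0) = 1 - Nε + o(ε)`, `P(S_0 → S_1) = Nε + o(ε)`,
`P(S_0 → S_j) = o(ε)` for `j ≥ 2`, and `P(S_i → S_{i-1}) → 1` for `i ≥ 1`,
the stationary probabilities satisfy `P_0 = 1 - Nε + o(ε)`, `P_1 = Nε + o(ε)` and
`P_i = o(ε)` for `i ≥ 2`. -/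
theorem stationary_asymptotics (N m : ℕ) (hN : 1 ≤ N) (hm : 1 ≤ m)
    (ε0 : ℝ) (hε0 : 0 < ε0)
    (P : ℝ → Fin (m + 1) → Fin (m + 1) → ℝ) (q : ℝ → Fin (m + 1) → ℝ)
    (hP : ∀ ε ∈ Set.Ioo (0 : ℝ) ε0, (∀ i j, 0 ≤ P ε i j) ∧ ∀ i, ∑ j, P ε i j = 1)
    (hirr : ∀ ε ∈ Set.Ioo (0 : ℝ) ε0, ∀ i j : Fin (m + 1), ∃ n : ℕ,
      0 < (Matrix.of (P ε) ^ n) i j)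
    (hstat : ∀ ε ∈ Set.Ioo (0 : ℝ) ε0,
      (∀ i, 0 ≤ q ε i) ∧ (∑ i, q ε i = 1) ∧ ∀ j, ∑ i, q ε i * P ε i j = q ε j)
    (h00 : (fun ε => P ε 0 0 - (1 - N * ε)) =o[𝓝[>] (0 : ℝ)] fun ε => ε)
    (h01 : (fun ε => P ε 0 1 - N * ε) =o[𝓝[>] (0 : ℝ)] fun ε => ε)
    (h0j : ∀ j : Fin (m + 1), 2 ≤ (j : ℕ) →
      (fun ε => P ε 0 j) =o[𝓝[>] (0 : ℝ)] fun ε => ε)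
    (hdown : ∀ i : Fin (m + 1), i ≠ 0 →
      Tendsto (fun ε => P ε i (i - 1)) (𝓝[>] (0 : ℝ)) (𝓝 1)) :
    ((fun ε => q ε 0 - (1 - N * ε)) =o[𝓝[>] (0 : ℝ)] fun ε => ε) ∧
    ((fun ε => q ε 1 - N * ε) =o[𝓝[>] (0 : ℝ)] fun ε => ε) ∧
    ∀ i : Fin (m + 1), 2 ≤ (i : ℕ) →
      (fun ε => q ε i) =o[𝓝[>] (0 : ℝ)] fun ε => ε :=
  stationary_asymptotics_general N m hm ε0 hε0 P q hP hstat h01 h0j hdown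
end
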